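/- Suppose k = ⊤ in V and there is a sequence (u_n) in V with ⋁_n u_n = k, each u_n totally below k, and u_n ≤ u_{n+1}. Then for every adjoint pair of V-modules φ : 1 ⇸ X, ψ : X ⇸ 1 with φ ⊣ ψ on a V-category X, there is a Cauchy sequence s in X with φ = φ_s and ψ = ψ_s. -/

import Mathlib

/-!
Total-belowness of `u n` in `k ≤ ⨆ x, φ x ⊗ ψ x` picks points `s n` with `u n ≤ φ (s n) ⊗ ψ (s n)`,
and since `k = ⊤` this gives `u n ≤ φ (s n)` and `u n ≤ ψ (s n)`. As `u` increases to `k`, the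
inequality `ψ x ⊗ φ y ≤ a x y` then makes `s` Cauchy and gives `φ ≤ φ_s`, while the module law
`φ x ⊗ a x y ≤ φ y` gives `φ_s ≤ φ`; dually for `ψ`.
-/

/-- A (commutative, unital) quantale structure on a complete lattice `V`:
an associative commutative multiplication `⊗` with unit `k` such that
`u ⊗ -` preserves arbitrary suprema. -/
structure QuantaleStr (V : Type*) [CompleteLattice V] where
  mul : V → V → V
  k : V
  mul_comm : ∀ a b, mul a b = mul b a
  mul_assoc : ∀ a b c, mul (mul a b) c = mul a (mul b c)
  mul_unit : ∀ a, mul a k = a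
  mul_sSup : ∀ (a : V) (S : Set V), mul a (sSup S) = ⨆ b ∈ S, mul a b

variable {V : Type*} [CompleteLattice V]

/-- `a : X → X → V` is a `V`-category structure: `k ≤ a x x` and
`a x y ⊗ a y z ≤ a x z`. -/
def IsVCat (Q : QuantaleStr V) {X : Type*} (a : X → X → V) : Prop :=
  (∀ x, Q.k ≤ a x x) ∧ ∀ x y z, Q.mul (a x y) (a y z) ≤ a x z


/-- The "Cauchyness" of a sequence `s` in a `V`-category `(X,a)`:
`C s = ⨆ N, ⨅_{n,m ≥ N} a (s n) (s m)`. -/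
def cauchyDeg (Q : QuantaleStr V) {X : Type*} (a : X → X → V) (s : ℕ → X) : V :=
  ⨆ N : ℕ, ⨅ n : ℕ, ⨅ m : ℕ, ⨅ _ : N ≤ n, ⨅ _ : N ≤ m, a (s n) (s m)

/-- `s` is a Cauchy sequence if `k ≤ C s`. -/
def IsCauchySeq (Q : QuantaleStr V) {X : Type*} (a : X → X → V) (s : ℕ → X) : Prop :=
  Q.k ≤ cauchyDeg Q a s


/-- The module `φ_s : 1 ⇸ X` associated to a sequence `s`:
`φ_s x = ⨆ N, ⨅_{n ≥ N} a (s n) x`. -/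
def phiSeq (Q : QuantaleStr V) {X : Type*} (a : X → X → V) (s : ℕ → X) (x : X) : V :=
  ⨆ N : ℕ, ⨅ n : ℕ, ⨅ _ : N ≤ n, a (s n) x

/-- The module `ψ_s : X ⇸ 1` associated to a sequence `s`:
`ψ_s x = ⨆ N, ⨅_{n ≥ N} a x (s n)`. -/
def psiSeq (Q : QuantaleStr V) {X : Type*} (a : X → X → V) (s : ℕ → X) (x : X) : V :=
  ⨆ N : ℕ, ⨅ n : ℕ, ⨅ _ : N ≤ n, a x (s n)

/-- `u` is totally below `x` in `V`. -/
def TotBelowV (u x : V) : Prop := ∀ S : Set V, x ≤ sSup S → ∃ s ∈ S, u ≤ s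

namespace QuantaleStr

variable (Q : QuantaleStr V)

theorem mul_iSup (b : V) {ι : Sort*} (f : ι → V) : Q.mul b (⨆ i, f i) = ⨆ i, Q.mul b (f i) := by
  rw [iSup, Q.mul_sSup, iSup_range]

theorem mul_le_mul_left {c d : V} (b : V) (h : c ≤ d) : Q.mul b c ≤ Q.mul b d := by
  have hd : Q.mul b d = ⨆ x ∈ ({c, d} : Set V), Q.mul b x := by
    rw [← Q.mul_sSup, sSup_pair, sup_eq_right.mpr h]
  rw [hd]
  exact le_biSup _ (Set.mem_insert _ _)

theorem mul_le_mul {b c d e : V} (h₁ : b ≤ d) (h₂ : c ≤ e) : Q.mul b c ≤ Q.mul d e :=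
  calc Q.mul b c ≤ Q.mul b e := Q.mul_le_mul_left b h₂
    _ = Q.mul e b := Q.mul_comm b e
    _ ≤ Q.mul e d := Q.mul_le_mul_left e h₁
    _ = Q.mul d e := Q.mul_comm e d

theorem mul_le_left (hk : Q.k = ⊤) (b c : V) : Q.mul b c ≤ b :=
  calc Q.mul b c ≤ Q.mul b Q.k := Q.mul_le_mul_left b (hk ▸ le_top)
    _ = b := Q.mul_unit b

theorem mul_le_right (hk : Q.k = ⊤) (b c : V) : Q.mul b c ≤ c :=
  Q.mul_comm b c ▸ Q.mul_le_left hk c b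

theorem iSup_mul_eq_self {ι : Sort*} {u : ι → V} (hu : ⨆ i, u i = Q.k) (b : V) :
    ⨆ i, Q.mul b (u i) = b := by
  rw [← Q.mul_iSup, hu, Q.mul_unit]

end QuantaleStr

theorem TotBelowV.exists_le_of_le_iSup {w z : V} (hw : TotBelowV w z) {ι : Sort*} {f : ι → V}
    (hz : z ≤ ⨆ i, f i) : ∃ i, w ≤ f i := by
  obtain ⟨_, ⟨i, rfl⟩, hi⟩ := hw (Set.range f) hz
  exact ⟨i, hi⟩

section AdjointSequence

variable (Q : QuantaleStr V) {X : Type*} (a : X → X → V) {φ ψ : X → V} {s : ℕ → X} {u : ℕ → V}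

theorem isCauchySeq_of_le_adjoint (hu : ⨆ n, u n = Q.k) (hmono : Monotone u)
    (adj : ∀ x y, Q.mul (ψ x) (φ y) ≤ a x y)
    (hφs : ∀ n, u n ≤ φ (s n)) (hψs : ∀ n, u n ≤ ψ (s n)) : IsCauchySeq Q a s := by
  have key : ∀ m n, Q.mul (u m) (u n) ≤ cauchyDeg Q a s := fun m n =>
    le_iSup_of_le (max m n) <| le_iInf fun p => le_iInf fun q => le_iInf fun hp => le_iInf fun hq =>
      (Q.mul_le_mul ((hmono (le_of_max_le_left hp)).trans (hψs p))
        ((hmono (le_of_max_le_right hq)).trans (hφs q))).trans (adj (s p) (s q))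
  calc Q.k = ⨆ m, Q.mul (u m) Q.k := by simp only [Q.mul_unit, hu]
    _ = ⨆ m, ⨆ n, Q.mul (u m) (u n) := by simp only [← Q.mul_iSup, hu]
    _ ≤ cauchyDeg Q a s := iSup₂_le key

theorem le_phiSeq (hu : ⨆ n, u n = Q.k) (hmono : Monotone u)
    (adj : ∀ x y, Q.mul (ψ x) (φ y) ≤ a x y) (hψs : ∀ n, u n ≤ ψ (s n)) (x : X) :
    φ x ≤ phiSeq Q a s x := by
  rw [← Q.iSup_mul_eq_self hu (φ x)]
  refine iSup_mono fun m => le_iInf₂ fun n hn => ?_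
  calc Q.mul (φ x) (u m) ≤ Q.mul (φ x) (ψ (s n)) := Q.mul_le_mul_left _ ((hmono hn).trans (hψs n))
    _ = Q.mul (ψ (s n)) (φ x) := Q.mul_comm _ _
    _ ≤ a (s n) x := adj (s n) x

theorem phiSeq_le (hu : ⨆ n, u n = Q.k) (hmono : Monotone u)
    (hφ : ∀ x y, Q.mul (φ x) (a x y) ≤ φ y) (hφs : ∀ n, u n ≤ φ (s n)) (x : X) :
    phiSeq Q a s x ≤ φ x := by
  refine iSup_le fun N => ?_
  rw [← Q.iSup_mul_eq_self hu (⨅ n, ⨅ _ : N ≤ n, a (s n) x)]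
  refine iSup_le fun m => ?_
  calc Q.mul (⨅ n, ⨅ _ : N ≤ n, a (s n) x) (u m)
        ≤ Q.mul (a (s (max m N)) x) (φ (s (max m N))) :=
          Q.mul_le_mul (iInf₂_le _ (le_max_right m N)) ((hmono (le_max_left m N)).trans (hφs _))
    _ = Q.mul (φ (s (max m N))) (a (s (max m N)) x) := Q.mul_comm _ _
    _ ≤ φ x := hφ _ _

theorem phiSeq_eq_of_le_adjoint (hu : ⨆ n, u n = Q.k) (hmono : Monotone u)
    (hφ : ∀ x y, Q.mul (φ x) (a x y) ≤ φ y) (adj : ∀ x y, Q.mul (ψ x) (φ y) ≤ a x y)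
    (hφs : ∀ n, u n ≤ φ (s n)) (hψs : ∀ n, u n ≤ ψ (s n)) : φ = phiSeq Q a s :=
  funext fun x => (le_phiSeq Q a hu hmono adj hψs x).antisymm (phiSeq_le Q a hu hmono hφ hφs x)

-- `ψ_s` is `φ_s` for the opposite `V`-category, in which the roles of `φ` and `ψ` swap.
theorem psiSeq_eq_of_le_adjoint (hu : ⨆ n, u n = Q.k) (hmono : Monotone u)
    (hψ : ∀ x y, Q.mul (a x y) (ψ y) ≤ ψ x) (adj : ∀ x y, Q.mul (ψ x) (φ y) ≤ a x y)
    (hφs : ∀ n, u n ≤ φ (s n)) (hψs : ∀ n, u n ≤ ψ (s n)) : ψ = psiSeq Q a s :=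
  phiSeq_eq_of_le_adjoint Q (flip a) hu hmono
    (fun x y => Q.mul_comm (ψ x) _ ▸ hψ y x) (fun x y => Q.mul_comm (φ x) _ ▸ adj y x) hψs hφs

end AdjointSequence

theorem adjoint_is_cauchy_sequence_general (Q : QuantaleStr V)
    (hk : Q.k = ⊤) (u : ℕ → V) (hu : (⨆ n, u n) = Q.k)
    (hub : ∀ n, TotBelowV (u n) Q.k) (hmono : ∀ n, u n ≤ u (n + 1))
    {X : Type*} (a : X → X → V)
    (φ ψ : X → V)
    (hφ : ∀ x y, Q.mul (φ x) (a x y) ≤ φ y)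
    (hψ : ∀ x y, Q.mul (a x y) (ψ y) ≤ ψ x)
    (adj₁ : Q.k ≤ ⨆ x : X, Q.mul (φ x) (ψ x))
    (adj₂ : ∀ x y : X, Q.mul (ψ x) (φ y) ≤ a x y) :
    ∃ s : ℕ → X, IsCauchySeq Q a s ∧ φ = phiSeq Q a s ∧ ψ = psiSeq Q a s := by
  choose s hs using fun n => (hub n).exists_le_of_le_iSup adj₁
  have hφs : ∀ n, u n ≤ φ (s n) := fun n => (hs n).trans (Q.mul_le_left hk _ _)
  have hψs : ∀ n, u n ≤ ψ (s n) := fun n => (hs n).trans (Q.mul_le_right hk _ _)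
  have umono : Monotone u := monotone_nat_of_le_succ hmono
  exact ⟨s, isCauchySeq_of_le_adjoint Q a hu umono adj₂ hφs hψs,
    phiSeq_eq_of_le_adjoint Q a hu umono hφ adj₂ hφs hψs,
    psiSeq_eq_of_le_adjoint Q a hu umono hψ adj₂ hφs hψs⟩

/-- Suppose `k = ⊤` and there is a sequence `(u_n)` in `V` with `⨆ n, u_n = k`,
each `u_n` totally below `k`, and `u_n ≤ u_{n+1}`. Then every adjoint pair of
modules `φ : 1 ⇸ X`, `ψ : X ⇸ 1` with `φ ⊣ ψ` on a `V`-category `X` is of the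
form `φ = φ_s`, `ψ = ψ_s` for some Cauchy sequence `s` in `X`. -/
theorem adjoint_is_cauchy_sequence (Q : QuantaleStr V)
    (hk : Q.k = ⊤) (u : ℕ → V) (hu : (⨆ n, u n) = Q.k)
    (hub : ∀ n, TotBelowV (u n) Q.k) (hmono : ∀ n, u n ≤ u (n + 1))
    {X : Type*} (a : X → X → V) (ha : IsVCat Q a)
    (φ ψ : X → V)
    (hφ : ∀ x y, Q.mul (φ x) (a x y) ≤ φ y)
    (hψ : ∀ x y, Q.mul (a x y) (ψ y) ≤ ψ x)
    (adj₁ : Q.k ≤ ⨆ x : X, Q.mul (φ x) (ψ x))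
    (adj₂ : ∀ x y : X, Q.mul (ψ x) (φ y) ≤ a x y) :
    ∃ s : ℕ → X, IsCauchySeq Q a s ∧ φ = phiSeq Q a s ∧ ψ = psiSeq Q a s :=
  adjoint_is_cauchy_sequence_general Q hk u hu hub hmono a φ ψ hφ hψ adj₁ adj₂
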